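/- arXiv:2302.12136 — 6 statements merged into one kernel-verified Lean document; each statement's English description precedes it below -/
import Mathlib

section
/- The map Φ sending (x', y', s', w', z') ∈ Q2' to (x, y, s, w, z) defined by x_t = x'_{2t}, y_t = y'_{2t−1}, s_t = s'_{2t}, w_t = w'_t, z_t = z'_t for t = 1,…,T is a bijection from Q2' onto Q2, whose inverse sends (x, y, s, w, z) ∈ Q2 to (x', y', s', w', z') defined by x'_{2t} = x_t, x'_{2t−1} = 0, y'_{2t} = 0, y'_{2t−1} = y_t, s'_{2t} = s_t, s'_{2t−1} = s_{t−1} − y_t, w'_t = w_t, z'_t = z_t; both Φ and its inverse are restrictions of linear maps. -/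
noncomputable section

/-- Membership in the feasible region `Q2` of the warehouse problem without
complementarity constraints (sales happen before purchases: `y_t ≤ s_{t-1}`).
Vectors are `ℕ`-indexed sequences; `x, y, w, z` vanish outside `{1,…,T}`, the
stock satisfies `s 0 = s0` and is continued constantly after time `T`. -/
def Q2mem (T : ℕ) (s0 : ℝ) (Ls Us Lx Ux Ly Uy : ℕ → ℝ)
    (x y s w z : ℕ → ℝ) : Prop :=
  s 0 = s0 ∧
  (∀ t, 1 ≤ t → t ≤ T →
    s t = s (t - 1) - y t + x t ∧
    y t ≤ s (t - 1) ∧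
    Ls t ≤ s t ∧ s t ≤ Us t ∧
    Ly t * z t ≤ y t ∧ y t ≤ Uy t * z t ∧
    Lx t * w t ≤ x t ∧ x t ≤ Ux t * w t ∧
    (w t = 0 ∨ w t = 1) ∧ (z t = 0 ∨ z t = 1)) ∧
  (∀ t, ¬(1 ≤ t ∧ t ≤ T) →
    x t = 0 ∧ y t = 0 ∧ w t = 0 ∧ z t = 0 ∧ (T < t → s t = s T))

def Q2 (T : ℕ) (s0 : ℝ) (Ls Us Lx Ux Ly Uy : ℕ → ℝ) :
    Set ((ℕ → ℝ) × (ℕ → ℝ) × (ℕ → ℝ) × (ℕ → ℝ) × (ℕ → ℝ)) :=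
  {p | Q2mem T s0 Ls Us Lx Ux Ly Uy p.1 p.2.1 p.2.2.1 p.2.2.2.1 p.2.2.2.2}

/-- Membership in the doubled-horizon region `Q2'`: during odd periods only
sales are allowed, during even periods only purchases.  The primed vectors
`x', y', s'` live on the doubled horizon `{1,…,2T}` (vanishing outside it,
with the stock continued constantly after time `2T`), while `w', z'` live on
`{1,…,T}`. -/
def Q2'mem (T : ℕ) (s0 : ℝ) (Ls Us Lx Ux Ly Uy : ℕ → ℝ)
    (x' y' s' w' z' : ℕ → ℝ) : Prop :=
  s' 0 = s0 ∧
  (∀ τ, 1 ≤ τ → τ ≤ 2 * T →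
    s' τ = s' (τ - 1) - y' τ + x' τ ∧ x' τ * y' τ = 0) ∧
  (∀ t, 1 ≤ t → t ≤ T →
    Ls t ≤ s' (2 * t) ∧ s' (2 * t) ≤ Us t ∧
    0 ≤ s' (2 * t - 1) ∧ s' (2 * t - 1) ≤ Us t ∧
    y' (2 * t) = 0 ∧
    Ly t * z' t ≤ y' (2 * t - 1) ∧ y' (2 * t - 1) ≤ Uy t * z' t ∧
    x' (2 * t - 1) = 0 ∧
    Lx t * w' t ≤ x' (2 * t) ∧ x' (2 * t) ≤ Ux t * w' t ∧
    (w' t = 0 ∨ w' t = 1) ∧ (z' t = 0 ∨ z' t = 1)) ∧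
  (∀ τ, ¬(1 ≤ τ ∧ τ ≤ 2 * T) →
    x' τ = 0 ∧ y' τ = 0 ∧ (2 * T < τ → s' τ = s' (2 * T))) ∧
  (∀ t, ¬(1 ≤ t ∧ t ≤ T) → w' t = 0 ∧ z' t = 0)

def Q2' (T : ℕ) (s0 : ℝ) (Ls Us Lx Ux Ly Uy : ℕ → ℝ) :
    Set ((ℕ → ℝ) × (ℕ → ℝ) × (ℕ → ℝ) × (ℕ → ℝ) × (ℕ → ℝ)) :=
  {p | Q2'mem T s0 Ls Us Lx Ux Ly Uy p.1 p.2.1 p.2.2.1 p.2.2.2.1 p.2.2.2.2}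

/-- The map `Φ : Q2' → Q2`, `x_t = x'_{2t}`, `y_t = y'_{2t-1}`, `s_t = s'_{2t}`,
`w_t = w'_t`, `z_t = z'_t`. -/
def doublingPhi :
    ((ℕ → ℝ) × (ℕ → ℝ) × (ℕ → ℝ) × (ℕ → ℝ) × (ℕ → ℝ)) →
      ((ℕ → ℝ) × (ℕ → ℝ) × (ℕ → ℝ) × (ℕ → ℝ) × (ℕ → ℝ)) :=
  fun p => (fun t => p.1 (2 * t), fun t => p.2.1 (2 * t - 1),
    fun t => p.2.2.1 (2 * t), p.2.2.2.1, p.2.2.2.2)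

/-- The map `Ψ : Q2 → Q2'`, `x'_{2t} = x_t`, `x'_{2t-1} = 0`, `y'_{2t} = 0`,
`y'_{2t-1} = y_t`, `s'_{2t} = s_t`, `s'_{2t-1} = s_{t-1} - y_t`, `w'_t = w_t`,
`z'_t = z_t`. -/
def doublingPsi :
    ((ℕ → ℝ) × (ℕ → ℝ) × (ℕ → ℝ) × (ℕ → ℝ) × (ℕ → ℝ)) →
      ((ℕ → ℝ) × (ℕ → ℝ) × (ℕ → ℝ) × (ℕ → ℝ) × (ℕ → ℝ)) :=
  fun p =>
    (fun τ => if τ % 2 = 0 then p.1 (τ / 2) else 0,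
     fun τ => if τ % 2 = 1 then p.2.1 ((τ + 1) / 2) else 0,
     fun τ => if τ % 2 = 0 then p.2.2.1 (τ / 2)
       else p.2.2.1 ((τ - 1) / 2) - p.2.1 ((τ + 1) / 2),
     p.2.2.2.1, p.2.2.2.2)

abbrev Vec5 := ((ℕ → ℝ) × (ℕ → ℝ) × (ℕ → ℝ) × (ℕ → ℝ) × (ℕ → ℝ))

lemma psi_x_even (p : Vec5) (t : ℕ) : (doublingPsi p).1 (2 * t) = p.1 t := by
  simp only [doublingPsi]
  rw [if_pos (by omega), show 2 * t / 2 = t by omega]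

lemma psi_x_odd (p : Vec5) (τ : ℕ) (h : τ % 2 = 1) : (doublingPsi p).1 τ = 0 := by
  simp only [doublingPsi]
  rw [if_neg (by omega)]

lemma psi_y_even (p : Vec5) (τ : ℕ) (h : τ % 2 = 0) : (doublingPsi p).2.1 τ = 0 := by
  simp only [doublingPsi]
  rw [if_neg (by omega)]

lemma psi_y_odd (p : Vec5) (t : ℕ) : (doublingPsi p).2.1 (2 * t + 1) = p.2.1 (t + 1) := by
  simp only [doublingPsi]
  rw [if_pos (by omega), show (2 * t + 1 + 1) / 2 = t + 1 by omega]

lemma psi_s_even (p : Vec5) (t : ℕ) : (doublingPsi p).2.2.1 (2 * t) = p.2.2.1 t := by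
  simp only [doublingPsi]
  rw [if_pos (by omega), show 2 * t / 2 = t by omega]

lemma psi_s_odd (p : Vec5) (t : ℕ) :
    (doublingPsi p).2.2.1 (2 * t + 1) = p.2.2.1 t - p.2.1 (t + 1) := by
  simp only [doublingPsi]
  rw [if_neg (by omega), show (2 * t + 1 - 1) / 2 = t by omega,
    show (2 * t + 1 + 1) / 2 = t + 1 by omega]

lemma phi_mem (T : ℕ) (s0 : ℝ) (Ls Us Lx Ux Ly Uy : ℕ → ℝ) (p : Vec5)
    (hp : p ∈ Q2' T s0 Ls Us Lx Ux Ly Uy) :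
    doublingPhi p ∈ Q2 T s0 Ls Us Lx Ux Ly Uy := by
  obtain ⟨x', y', s', w', z'⟩ := p
  obtain ⟨h0, hflow, hbd, hout, hwz⟩ := hp
  dsimp only at h0 hflow hbd hout hwz
  simp only [Q2, Set.mem_setOf_eq, Q2mem, doublingPhi]
  refine ⟨by simpa using h0, ?_, ?_⟩
  · intro t ht1 htT
    obtain ⟨hLs, hUs, hs1l, hs1u, hy0, hLy, hUy, hx0, hLx, hUx, hw, hz⟩ := hbd t ht1 htT
    have hfe := (hflow (2 * t) (by omega) (by omega)).1
    have hfo := (hflow (2 * t - 1) (by omega) (by omega)).1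
    rw [show 2 * t - 1 - 1 = 2 * (t - 1) by omega] at hfo
    refine ⟨?_, ?_, hLs, hUs, hLy, hUy, hLx, hUx, hw, hz⟩
    · rw [hfe, hfo, hy0, hx0]; ring
    · rw [hx0] at hfo; linarith
  · intro t ht
    have h2 : ¬(1 ≤ 2 * t ∧ 2 * t ≤ 2 * T) := by omega
    have h1 : ¬(1 ≤ 2 * t - 1 ∧ 2 * t - 1 ≤ 2 * T) := by omega
    exact ⟨(hout _ h2).1, (hout _ h1).2.1, (hwz t ht).1, (hwz t ht).2,
      fun hTt => (hout (2 * t) h2).2.2 (by omega)⟩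

lemma psi_mem (T : ℕ) (s0 : ℝ) (Ls Us Lx Ux Ly Uy : ℕ → ℝ)
    (hnn : ∀ t, 1 ≤ t → t ≤ T →
      0 ≤ Ls t ∧ 0 ≤ Us t ∧ 0 ≤ Lx t ∧ 0 ≤ Ux t ∧ 0 ≤ Ly t ∧ 0 ≤ Uy t)
    (q : Vec5) (hq : q ∈ Q2 T s0 Ls Us Lx Ux Ly Uy) :
    doublingPsi q ∈ Q2' T s0 Ls Us Lx Ux Ly Uy := by
  obtain ⟨h0, hbd, hout⟩ := hq
  set x := q.1; set y := q.2.1; set s := q.2.2.1; set w := q.2.2.2.1; set z := q.2.2.2.2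
  have hynn : ∀ t, 0 ≤ y t := by
    intro t
    by_cases h : 1 ≤ t ∧ t ≤ T
    · obtain ⟨-, -, -, -, hLy, -, -, -, -, hz⟩ := hbd t h.1 h.2
      have hL := (hnn t h.1 h.2).2.2.2.2.1
      rcases hz with hz | hz <;> rw [hz] at hLy <;> nlinarith
    · rw [(hout t h).2.1]
  have hxnn : ∀ t, 0 ≤ x t := by
    intro t
    by_cases h : 1 ≤ t ∧ t ≤ T
    · obtain ⟨-, -, -, -, -, -, hLx, -, hw, -⟩ := hbd t h.1 h.2
      have hL := (hnn t h.1 h.2).2.2.1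
      rcases hw with hw | hw <;> rw [hw] at hLx <;> nlinarith
    · rw [(hout t h).1]
  refine ⟨?_, ?_, ?_, ?_, ?_⟩
  · show (doublingPsi q).2.2.1 (2 * 0) = s0
    rw [psi_s_even]; exact h0
  · intro τ hτ1 hτ2
    obtain ⟨t, rfl | rfl⟩ : ∃ t, τ = 2 * t ∨ τ = 2 * t + 1 := ⟨τ / 2, by omega⟩
    · have ht1 : 1 ≤ t := by omega
      have htT : t ≤ T := by omega
      obtain ⟨hfl, hys, -, -, -, -, -, -, -, -⟩ := hbd t ht1 htT
      rw [show 2 * t - 1 = 2 * (t - 1) + 1 by omega, psi_s_even, psi_s_odd,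
        psi_x_even, psi_y_even _ _ (by omega), show t - 1 + 1 = t by omega, mul_zero]
      exact ⟨by linarith, rfl⟩
    · have htT : t + 1 ≤ T := by omega
      rw [show 2 * t + 1 - 1 = 2 * t by omega, psi_s_odd, psi_s_even, psi_y_odd,
        psi_x_odd _ _ (by omega), zero_mul]
      exact ⟨by ring, rfl⟩
  · intro t ht1 htT
    obtain ⟨hfl, hys, hLs, hUs, hLy, hUy, hLx, hUx, hw, hz⟩ := hbd t ht1 htT
    have e : 2 * t - 1 = 2 * (t - 1) + 1 := by omega
    have e2 : t - 1 + 1 = t := by omega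
    rw [psi_s_even, e, psi_s_odd, psi_y_even _ _ (by omega), psi_y_odd, psi_x_odd _ _ (by omega),
      psi_x_even, e2]
    exact ⟨hLs, hUs, by linarith, by linarith [hxnn t], rfl, hLy, hUy, rfl, hLx, hUx, hw, hz⟩
  · intro τ hτ
    obtain ⟨t, rfl | rfl⟩ : ∃ t, τ = 2 * t ∨ τ = 2 * t + 1 := ⟨τ / 2, by omega⟩
    · have ht : ¬(1 ≤ t ∧ t ≤ T) := by omega
      rw [psi_x_even, psi_y_even _ _ (by omega), psi_s_even,
        show 2 * T = 2 * T by rfl]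
      refine ⟨(hout t ht).1, rfl, fun h2 => ?_⟩
      rw [psi_s_even]
      exact (hout t ht).2.2.2.2 (by omega)
    · have ht : ¬(1 ≤ t + 1 ∧ t + 1 ≤ T) := by omega
      rw [psi_x_odd _ _ (by omega), psi_y_odd, psi_s_odd]
      refine ⟨rfl, (hout (t + 1) ht).2.1, fun h2 => ?_⟩
      rw [psi_s_even]
      show s t - y (t + 1) = s T
      rw [(hout (t + 1) ht).2.1, sub_zero]
      rcases Nat.lt_or_ge T t with h | h
      · exact (hout t (by omega)).2.2.2.2 (by omega)
      · rw [show t = T by omega]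
  · intro t ht
    exact ⟨(hout t ht).2.2.1, (hout t ht).2.2.2.1⟩

lemma psi_phi (T : ℕ) (s0 : ℝ) (Ls Us Lx Ux Ly Uy : ℕ → ℝ) (p : Vec5)
    (hp : p ∈ Q2' T s0 Ls Us Lx Ux Ly Uy) :
    doublingPsi (doublingPhi p) = p := by
  obtain ⟨x', y', s', w', z'⟩ := p
  obtain ⟨h0, hflow, hbd, hout, hwz⟩ := hp
  dsimp only at h0 hflow hbd hout hwz
  -- auxiliary vanishing facts
  have hxodd : ∀ τ, τ % 2 = 1 → x' τ = 0 := by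
    intro τ h
    by_cases h1 : 1 ≤ τ ∧ τ ≤ 2 * T
    · have := (hbd ((τ + 1) / 2) (by omega) (by omega)).2.2.2.2.2.2.2.1
      rwa [show 2 * ((τ + 1) / 2) - 1 = τ by omega] at this
    · exact (hout τ h1).1
  have hyeven : ∀ τ, τ % 2 = 0 → y' τ = 0 := by
    intro τ h
    by_cases h1 : 1 ≤ τ ∧ τ ≤ 2 * T
    · have := (hbd (τ / 2) (by omega) (by omega)).2.2.2.2.1
      rwa [show 2 * (τ / 2) = τ by omega] at this
    · exact (hout τ h1).2.1
  simp only [doublingPsi, doublingPhi, Prod.mk.injEq]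
  refine ⟨funext fun τ => ?_, funext fun τ => ?_, funext fun τ => ?_, trivial⟩
  · by_cases h : τ % 2 = 0
    · rw [if_pos h, show 2 * (τ / 2) = τ by omega]
    · rw [if_neg h, (hxodd τ (by omega))]
  · by_cases h : τ % 2 = 1
    · rw [if_pos h, show 2 * ((τ + 1) / 2) - 1 = τ by omega]
    · rw [if_neg h, hyeven τ (by omega)]
  · by_cases h : τ % 2 = 0
    · rw [if_pos h, show 2 * (τ / 2) = τ by omega]
    · rw [if_neg h, show 2 * ((τ - 1) / 2) = τ - 1 by omega,
        show 2 * ((τ + 1) / 2) - 1 = τ by omega]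
      by_cases h1 : τ ≤ 2 * T
      · have hfl := (hflow τ (by omega) h1).1
        have hx := hxodd τ (by omega)
        rw [hx] at hfl
        linarith
      · have hy := (hout τ (by omega)).2.1
        have hs : s' τ = s' (2 * T) := (hout τ (by omega)).2.2 (by omega)
        have hs1 : s' (τ - 1) = s' (2 * T) := by
          rcases Nat.lt_or_ge (2 * T) (τ - 1) with h2 | h2
          · exact (hout (τ - 1) (by omega)).2.2 h2
          · rw [show τ - 1 = 2 * T by omega]
        rw [hy, hs, hs1, sub_zero]

lemma phi_psi (T : ℕ) (s0 : ℝ) (Ls Us Lx Ux Ly Uy : ℕ → ℝ) (q : Vec5)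
    (hq : q ∈ Q2 T s0 Ls Us Lx Ux Ly Uy) :
    doublingPhi (doublingPsi q) = q := by
  obtain ⟨x, y, s, w, z⟩ := q
  obtain ⟨h0, hbd, hout⟩ := hq
  dsimp only at h0 hbd hout
  simp only [doublingPhi, doublingPsi, Prod.mk.injEq]
  refine ⟨funext fun t => ?_, funext fun t => ?_, funext fun t => ?_, trivial⟩
  · rw [if_pos (by omega), show 2 * t / 2 = t by omega]
  · rcases Nat.eq_zero_or_pos t with rfl | ht
    · rw [if_neg (by omega)]
      exact ((hout 0 (by omega)).2.1).symm
    · rw [if_pos (by omega), show (2 * t - 1 + 1) / 2 = t by omega]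
  · rw [if_pos (by omega), show 2 * t / 2 = t by omega]

lemma phi_linear : IsLinearMap ℝ doublingPhi := by
  constructor
  · intro p q; rfl
  · intro c p; rfl

lemma psi_linear : IsLinearMap ℝ doublingPsi := by
  constructor
  · intro p q
    simp only [doublingPsi, Prod.fst_add, Prod.snd_add, Pi.add_apply, Prod.mk.injEq,
      Prod.mk_add_mk]
    refine ⟨funext fun τ => ?_, funext fun τ => ?_, funext fun τ => ?_, trivial⟩ <;>
      simp only [Pi.add_apply] <;> split_ifs <;> ring
  · intro c p
    simp only [doublingPsi, Prod.smul_fst, Prod.smul_snd, Pi.smul_apply, Prod.mk.injEq,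
      Prod.smul_mk, smul_eq_mul]
    refine ⟨funext fun τ => ?_, funext fun τ => ?_, funext fun τ => ?_, trivial⟩ <;>
      simp only [Pi.smul_apply, smul_eq_mul] <;> split_ifs <;> ring

/-- **Lemma**: `Φ` is a bijection from `Q2'` onto `Q2` with inverse `Ψ`, and
both `Φ` and `Ψ` are (restrictions of) linear maps. -/
theorem Q2'_Q2_linear_bijection
    (T : ℕ) (hT : 1 ≤ T) (s0 : ℝ) (Ls Us Lx Ux Ly Uy : ℕ → ℝ)
    (hnn : ∀ t, 1 ≤ t → t ≤ T →
      0 ≤ Ls t ∧ 0 ≤ Us t ∧ 0 ≤ Lx t ∧ 0 ≤ Ux t ∧ 0 ≤ Ly t ∧ 0 ≤ Uy t) :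
    Set.BijOn doublingPhi (Q2' T s0 Ls Us Lx Ux Ly Uy)
        (Q2 T s0 Ls Us Lx Ux Ly Uy) ∧
      (∀ p ∈ Q2' T s0 Ls Us Lx Ux Ly Uy, doublingPsi (doublingPhi p) = p) ∧
      (∀ q ∈ Q2 T s0 Ls Us Lx Ux Ly Uy, doublingPhi (doublingPsi q) = q) ∧
      IsLinearMap ℝ doublingPhi ∧ IsLinearMap ℝ doublingPsi := by
  refine ⟨⟨fun p hp => phi_mem T s0 Ls Us Lx Ux Ly Uy p hp, ?_, ?_⟩,
    fun p hp => psi_phi T s0 Ls Us Lx Ux Ly Uy p hp,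
    fun q hq => phi_psi T s0 Ls Us Lx Ux Ly Uy q hq, phi_linear, psi_linear⟩
  · intro p hp q hq h
    rw [← psi_phi T s0 Ls Us Lx Ux Ly Uy p hp, ← psi_phi T s0 Ls Us Lx Ux Ly Uy q hq, h]
  · intro q hq
    exact ⟨doublingPsi q, psi_mem T s0 Ls Us Lx Ux Ly Uy hnn q hq,
      phi_psi T s0 Ls Us Lx Ux Ly Uy q hq⟩
end
end

section
/- Let d_1,…,d_k be positive reals and r_1,…,r_k positive integers, and suppose that for every t the bounds L^x_t, L^y_t, U^x_t, U^y_t all lie in the lattice set {Σ_{i=1}^k α_i d_i : α_i ∈ ℤ, |α_i| ≤ r_i}. Then for every t ∈ {1,…,T}, S_t ⊆ {K + Σ_{i=1}^k β_i d_i : β_i ∈ ℤ, |β_i| ≤ T·r_i, K ∈ {s_0, L^s_1, …, L^s_T, U^s_1, …, U^s_T}}; consequently S_t is finite with |S_t| ≤ (2T+1)^{k+1}·r_1·r_2⋯r_k. -/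
noncomputable section

/-- `v` is a `{0,1}`-vector. -/
def IsBinaryVec (v : ℕ → ℝ) : Prop := ∀ i, v i = 0 ∨ v i = 1

/-- The set `S_t` of potential stock levels at the end of period `t`. -/
def stockLevelSet (T t : ℕ) (s0 : ℝ) (Ls Us Lx Ux Ly Uy : ℕ → ℝ) : Set ℝ :=
  ({r | ∃ K, (K = s0 ∨ (∃ i, 1 ≤ i ∧ i ≤ t ∧ K = Us i) ∨
        (∃ i, 1 ≤ i ∧ i ≤ t ∧ K = Ls i)) ∧
      ∃ v1 v2 u1 u2 : ℕ → ℝ,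
        IsBinaryVec v1 ∧ IsBinaryVec v2 ∧ IsBinaryVec u1 ∧ IsBinaryVec u2 ∧
        (∀ i, v1 i + v2 i + u1 i + u2 i ≤ 1) ∧
        r = K - (∑ i ∈ Finset.Icc 1 t, (v1 i * Ly i + v2 i * Uy i))
              + ∑ i ∈ Finset.Icc 1 t, (u1 i * Lx i + u2 i * Ux i)} ∪
    {r | ∃ K', ((∃ i, t + 1 ≤ i ∧ i ≤ T ∧ K' = Us i) ∨
        (∃ i, t + 1 ≤ i ∧ i ≤ T ∧ K' = Ls i)) ∧
      ∃ v3 v4 u3 u4 : ℕ → ℝ,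
        IsBinaryVec v3 ∧ IsBinaryVec v4 ∧ IsBinaryVec u3 ∧ IsBinaryVec u4 ∧
        (∀ i, v3 i + v4 i + u3 i + u4 i ≤ 1) ∧
        r = K' + (∑ i ∈ Finset.Icc (t + 1) T, (v3 i * Ly i + v4 i * Uy i))
              - ∑ i ∈ Finset.Icc (t + 1) T, (u3 i * Lx i + u4 i * Ux i)}) ∩
    Set.Icc (Ls t) (Us t)

private lemma sum_lattice_rep {k : ℕ} (d : Fin k → ℝ) (r : Fin k → ℕ)
    (S : Finset ℕ) (f : ℕ → ℝ)
    (h : ∀ i ∈ S, ∃ α : Fin k → ℤ, (∀ j, |α j| ≤ (r j : ℤ)) ∧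
      f i = ∑ j, (α j : ℝ) * d j) :
    ∃ β : Fin k → ℤ, (∀ j, |β j| ≤ (S.card : ℤ) * (r j : ℤ)) ∧
      ∑ i ∈ S, f i = ∑ j, (β j : ℝ) * d j := by
  classical
  choose α hα hf using h
  set g : ℕ → Fin k → ℤ := fun i => if hi : i ∈ S then α i hi else 0 with hg
  refine ⟨fun j => ∑ i ∈ S, g i j, ?_, ?_⟩
  · intro j
    calc |∑ i ∈ S, g i j| ≤ ∑ i ∈ S, |g i j| := Finset.abs_sum_le_sum_abs _ _
      _ ≤ ∑ _i ∈ S, (r j : ℤ) := by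
          refine Finset.sum_le_sum fun i hi => ?_
          simp only [hg, dif_pos hi]
          exact hα i hi j
      _ = (S.card : ℤ) * (r j : ℤ) := by
          rw [Finset.sum_const, nsmul_eq_mul]
  · have : ∀ i ∈ S, f i = ∑ j, (g i j : ℝ) * d j := by
      intro i hi
      simp only [hg, dif_pos hi]
      exact hf i hi
    rw [Finset.sum_congr rfl this, Finset.sum_comm]
    refine Finset.sum_congr rfl fun j _ => ?_
    rw [← Finset.sum_mul]
    push_cast
    ring

private lemma rep_neg {k : ℕ} (d : Fin k → ℝ) (r : Fin k → ℕ) (x : ℝ)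
    (h : ∃ α : Fin k → ℤ, (∀ j, |α j| ≤ (r j : ℤ)) ∧ x = ∑ j, (α j : ℝ) * d j) :
    ∃ α : Fin k → ℤ, (∀ j, |α j| ≤ (r j : ℤ)) ∧ -x = ∑ j, (α j : ℝ) * d j := by
  obtain ⟨α, hα, hx⟩ := h
  refine ⟨fun j => -α j, fun j => by simpa using hα j, ?_⟩
  rw [hx, ← Finset.sum_neg_distrib]
  refine Finset.sum_congr rfl fun j _ => ?_
  push_cast; ring

private lemma per_index {k : ℕ} (d : Fin k → ℝ) (r : Fin k → ℕ)
    (a b c e : ℝ) (v1 v2 u1 u2 : ℝ)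
    (hv1 : v1 = 0 ∨ v1 = 1) (hv2 : v2 = 0 ∨ v2 = 1)
    (hu1 : u1 = 0 ∨ u1 = 1) (hu2 : u2 = 0 ∨ u2 = 1)
    (hsum : v1 + v2 + u1 + u2 ≤ 1)
    (ha : ∃ α : Fin k → ℤ, (∀ j, |α j| ≤ (r j : ℤ)) ∧ a = ∑ j, (α j : ℝ) * d j)
    (hb : ∃ α : Fin k → ℤ, (∀ j, |α j| ≤ (r j : ℤ)) ∧ b = ∑ j, (α j : ℝ) * d j)
    (hc : ∃ α : Fin k → ℤ, (∀ j, |α j| ≤ (r j : ℤ)) ∧ c = ∑ j, (α j : ℝ) * d j)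
    (he : ∃ α : Fin k → ℤ, (∀ j, |α j| ≤ (r j : ℤ)) ∧ e = ∑ j, (α j : ℝ) * d j) :
    ∃ α : Fin k → ℤ, (∀ j, |α j| ≤ (r j : ℤ)) ∧
      (u1 * c + u2 * e) - (v1 * a + v2 * b) = ∑ j, (α j : ℝ) * d j := by
  have hzero : ∃ α : Fin k → ℤ, (∀ j, |α j| ≤ (r j : ℤ)) ∧
      (0 : ℝ) = ∑ j, (α j : ℝ) * d j := ⟨0, fun j => by simp, by simp⟩
  rcases hv1 with h1 | h1 <;> rcases hv2 with h2 | h2 <;>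
    rcases hu1 with h3 | h3 <;> rcases hu2 with h4 | h4 <;>
    subst h1 <;> subst h2 <;> subst h3 <;> subst h4 <;>
    first
    | (exfalso; linarith)
    | (simpa using hzero)
    | (simpa using hc)
    | (simpa using he)
    | (simpa using rep_neg d r a ha)
    | (simpa using rep_neg d r b hb)

/-- **Lemma (lattice-structured bounds)**: if all the purchase/sale bounds lie
on the lattice generated by `d_1,…,d_k` with coefficients bounded by
`r_1,…,r_k`, then `S_t` is contained in the displayed lattice-like set, hence
finite with at most `(2T+1)^(k+1) * r_1 ⋯ r_k` elements. -/
theorem stockLevelSet_lattice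
    (T : ℕ) (hT : 1 ≤ T) (s0 : ℝ) (Ls Us Lx Ux Ly Uy : ℕ → ℝ)
    (hnn : ∀ t, 1 ≤ t → t ≤ T →
      0 ≤ Ls t ∧ 0 ≤ Us t ∧ 0 ≤ Lx t ∧ 0 ≤ Ux t ∧ 0 ≤ Ly t ∧ 0 ≤ Uy t)
    (k : ℕ) (d : Fin k → ℝ) (hd : ∀ i, 0 < d i) (r : Fin k → ℕ)
    (hr : ∀ i, 0 < r i)
    (hlattice : ∀ t, 1 ≤ t → t ≤ T → ∀ b ∈ ({Lx t, Ux t, Ly t, Uy t} : Set ℝ),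
      ∃ α : Fin k → ℤ, (∀ i, |α i| ≤ (r i : ℤ)) ∧ b = ∑ i, (α i : ℝ) * d i)
    (t : ℕ) (ht1 : 1 ≤ t) (htT : t ≤ T) :
    stockLevelSet T t s0 Ls Us Lx Ux Ly Uy ⊆
      {v | ∃ K, (K = s0 ∨ (∃ i, 1 ≤ i ∧ i ≤ T ∧ (K = Ls i ∨ K = Us i))) ∧
        ∃ β : Fin k → ℤ, (∀ i, |β i| ≤ (T : ℤ) * (r i : ℤ)) ∧
          v = K + ∑ i, (β i : ℝ) * d i} ∧
    (stockLevelSet T t s0 Ls Us Lx Ux Ly Uy).Finite ∧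
    (stockLevelSet T t s0 Ls Us Lx Ux Ly Uy).ncard ≤
      (2 * T + 1) ^ (k + 1) * ∏ i, r i := by
  classical
  -- the subset part
  have hsub : stockLevelSet T t s0 Ls Us Lx Ux Ly Uy ⊆
      {v | ∃ K, (K = s0 ∨ (∃ i, 1 ≤ i ∧ i ≤ T ∧ (K = Ls i ∨ K = Us i))) ∧
        ∃ β : Fin k → ℤ, (∀ i, |β i| ≤ (T : ℤ) * (r i : ℤ)) ∧
          v = K + ∑ i, (β i : ℝ) * d i} := by
    intro x hx
    obtain ⟨hx, -⟩ := hx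
    rcases hx with ⟨K, hK, v1, v2, u1, u2, hb1, hb2, hb3, hb4, hle, hxr⟩ |
      ⟨K, hK, v3, v4, u3, u4, hb1, hb2, hb3, hb4, hle, hxr⟩
    · -- first component
      have hrep : ∀ i ∈ Finset.Icc 1 t, ∃ α : Fin k → ℤ,
          (∀ j, |α j| ≤ (r j : ℤ)) ∧
          (u1 i * Lx i + u2 i * Ux i) - (v1 i * Ly i + v2 i * Uy i)
            = ∑ j, (α j : ℝ) * d j := by
        intro i hi
        rw [Finset.mem_Icc] at hi
        have hL := hlattice i hi.1 (hi.2.trans htT)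
        exact per_index d r (Ly i) (Uy i) (Lx i) (Ux i) _ _ _ _
          (hb1 i) (hb2 i) (hb3 i) (hb4 i) (hle i)
          (hL (Ly i) (by simp)) (hL (Uy i) (by simp))
          (hL (Lx i) (by simp)) (hL (Ux i) (by simp))
      obtain ⟨β, hβ, hsumβ⟩ := sum_lattice_rep d r _ _ hrep
      have hxK : x - K = ∑ j, (β j : ℝ) * d j := by
        rw [← hsumβ, Finset.sum_sub_distrib, hxr]
        ring
      refine ⟨K, ?_, β, ?_, by linarith [hxK]⟩
      · rcases hK with h | ⟨i, hi1, hi2, hKi⟩ | ⟨i, hi1, hi2, hKi⟩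
        · exact Or.inl h
        · exact Or.inr ⟨i, hi1, hi2.trans htT, Or.inr hKi⟩
        · exact Or.inr ⟨i, hi1, hi2.trans htT, Or.inl hKi⟩
      · intro j
        have hcard : (Finset.Icc 1 t).card = t := by
          rw [Nat.card_Icc]; omega
        calc |β j| ≤ ((Finset.Icc 1 t).card : ℤ) * (r j : ℤ) := hβ j
          _ ≤ (T : ℤ) * (r j : ℤ) := by
              rw [hcard]
              exact mul_le_mul_of_nonneg_right (by exact_mod_cast htT)
                (by positivity)
    · -- second component
      have hrep : ∀ i ∈ Finset.Icc (t + 1) T, ∃ α : Fin k → ℤ,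
          (∀ j, |α j| ≤ (r j : ℤ)) ∧
          (v3 i * Ly i + v4 i * Uy i) - (u3 i * Lx i + u4 i * Ux i)
            = ∑ j, (α j : ℝ) * d j := by
        intro i hi
        rw [Finset.mem_Icc] at hi
        have hi1 : 1 ≤ i := by omega
        have hL := hlattice i hi1 hi.2
        exact per_index d r (Lx i) (Ux i) (Ly i) (Uy i) (u3 i) (u4 i) (v3 i) (v4 i)
          (hb3 i) (hb4 i) (hb1 i) (hb2 i) (by linarith [hle i])
          (hL (Lx i) (by simp)) (hL (Ux i) (by simp))
          (hL (Ly i) (by simp)) (hL (Uy i) (by simp))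
      obtain ⟨β, hβ, hsumβ⟩ := sum_lattice_rep d r _ _ hrep
      have hxK : x - K = ∑ j, (β j : ℝ) * d j := by
        rw [← hsumβ, Finset.sum_sub_distrib, hxr]
        ring
      refine ⟨K, ?_, β, ?_, by linarith [hxK]⟩
      · rcases hK with ⟨i, hi1, hi2, hKi⟩ | ⟨i, hi1, hi2, hKi⟩
        · exact Or.inr ⟨i, by omega, hi2, Or.inr hKi⟩
        · exact Or.inr ⟨i, by omega, hi2, Or.inl hKi⟩
      · intro j
        have hcard : (Finset.Icc (t + 1) T).card = T - t := by
          rw [Nat.card_Icc]; omega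
        calc |β j| ≤ ((Finset.Icc (t + 1) T).card : ℤ) * (r j : ℤ) := hβ j
          _ ≤ (T : ℤ) * (r j : ℤ) := by
              rw [hcard]
              refine mul_le_mul_of_nonneg_right ?_ (by positivity)
              exact_mod_cast Nat.sub_le T t
  -- the finite superset
  set Kfin : Finset ℝ :=
    insert s0 ((Finset.Icc 1 T).image Ls ∪ (Finset.Icc 1 T).image Us) with hKfin
  set Bfin : Finset (Fin k → ℤ) :=
    Fintype.piFinset fun i => Finset.Icc (-((T : ℤ) * (r i : ℤ))) ((T : ℤ) * (r i : ℤ))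
    with hBfin
  set target : Finset ℝ :=
    (Kfin ×ˢ Bfin).image fun p => p.1 + ∑ i, (p.2 i : ℝ) * d i with htarget
  have hsub2 : {v : ℝ | ∃ K, (K = s0 ∨ (∃ i, 1 ≤ i ∧ i ≤ T ∧ (K = Ls i ∨ K = Us i))) ∧
        ∃ β : Fin k → ℤ, (∀ i, |β i| ≤ (T : ℤ) * (r i : ℤ)) ∧
          v = K + ∑ i, (β i : ℝ) * d i} ⊆ ↑target := by
    rintro x ⟨K, hK, β, hβ, hx⟩
    refine Finset.mem_coe.2 (Finset.mem_image.2 ⟨(K, β),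
      Finset.mem_product.2 ⟨?_, ?_⟩, hx.symm⟩)
    · rcases hK with h | ⟨i, hi1, hi2, hKi | hKi⟩
      · exact h ▸ Finset.mem_insert_self _ _
      · exact Finset.mem_insert_of_mem (Finset.mem_union_left _
          (Finset.mem_image.2 ⟨i, Finset.mem_Icc.2 ⟨hi1, hi2⟩, hKi.symm⟩))
      · exact Finset.mem_insert_of_mem (Finset.mem_union_right _
          (Finset.mem_image.2 ⟨i, Finset.mem_Icc.2 ⟨hi1, hi2⟩, hKi.symm⟩))
    · exact Fintype.mem_piFinset.2 fun i => Finset.mem_Icc.2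
        ⟨(abs_le.1 (hβ i)).1, (abs_le.1 (hβ i)).2⟩
  have hst : stockLevelSet T t s0 Ls Us Lx Ux Ly Uy ⊆ ↑target := hsub.trans hsub2
  have hKcard : Kfin.card ≤ 2 * T + 1 := by
    calc Kfin.card ≤ ((Finset.Icc 1 T).image Ls ∪ (Finset.Icc 1 T).image Us).card + 1 :=
        Finset.card_insert_le _ _
      _ ≤ ((Finset.Icc 1 T).image Ls).card + ((Finset.Icc 1 T).image Us).card + 1 := by
          exact Nat.add_le_add_right (Finset.card_union_le _ _) 1
      _ ≤ (Finset.Icc 1 T).card + (Finset.Icc 1 T).card + 1 := by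
          exact Nat.add_le_add_right
            (Nat.add_le_add (Finset.card_image_le) (Finset.card_image_le)) 1
      _ = 2 * T + 1 := by rw [Nat.card_Icc]; omega
  have hBcard : Bfin.card ≤ (2 * T + 1) ^ k * ∏ i, r i := by
    have h1 : Bfin.card = ∏ i : Fin k, (2 * T * r i + 1) := by
      rw [hBfin, Fintype.card_piFinset]
      refine Finset.prod_congr rfl fun i _ => ?_
      rw [Int.card_Icc]
      have : (T : ℤ) * (r i : ℤ) + 1 - -((T : ℤ) * (r i : ℤ))
          = ((2 * T * r i + 1 : ℕ) : ℤ) := by push_cast; ring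
      rw [this, Int.toNat_natCast]
    rw [h1]
    have hstep : ∏ i : Fin k, (2 * T * r i + 1) ≤ ∏ i : Fin k, ((2 * T + 1) * r i) := by
      refine Finset.prod_le_prod' fun i _ => ?_
      have := hr i
      nlinarith
    calc ∏ i : Fin k, (2 * T * r i + 1) ≤ ∏ i : Fin k, ((2 * T + 1) * r i) := hstep
      _ = (2 * T + 1) ^ k * ∏ i, r i := by
        rw [Finset.prod_mul_distrib, Finset.prod_const, Finset.card_univ,
          Fintype.card_fin]
  refine ⟨hsub, Set.Finite.subset target.finite_toSet hst, ?_⟩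
  calc (stockLevelSet T t s0 Ls Us Lx Ux Ly Uy).ncard
      ≤ (↑target : Set ℝ).ncard := Set.ncard_le_ncard hst target.finite_toSet
    _ = target.card := Set.ncard_coe_finset _
    _ ≤ (Kfin ×ˢ Bfin).card := Finset.card_image_le
    _ = Kfin.card * Bfin.card := Finset.card_product _ _
    _ ≤ (2 * T + 1) * ((2 * T + 1) ^ k * ∏ i, r i) :=
        Nat.mul_le_mul hKcard hBcard
    _ = (2 * T + 1) ^ (k + 1) * ∏ i, r i := by ring
end
end

section
/- Suppose L^s_t ≤ s_0 ≤ U^s_t for all t, suppose at least one of the bounds U^x_1,…,U^x_T, U^y_1,…,U^y_T is positive, and let U_min = min({U^x_t : U^x_t > 0} ∪ {U^y_t : U^y_t > 0}). Let 0 < ε < 1 and K = ε·U_min. Let (x, y, s) ∈ Q3 and define x̄_t = (1−ε)·x_t, ȳ_t = (1−ε)·y_t, and s̄_t = s_0 + (1−ε)·(s_t − s_0) for all t. Then: (a) (x̄, ȳ, s̄) satisfies s̄_t = s̄_{t−1} − ȳ_t + x̄_t, x̄_t·ȳ_t = 0, L^s_t ≤ s̄_t ≤ U^s_t, 0 ≤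 x̄_t ≤ K·⌊U^x_t/K⌋, and 0 ≤ ȳ_t ≤ K·⌊U^y_t/K⌋ for all t, i.e., it is feasible for the scaled instance with purchase/sale upper bounds rounded down to integer multiples of K; and (b) for any p, c ∈ ℝ^T, Σ_{t=1}^T (p_t·ȳ_t − c_t·x̄_t) = (1−ε)·Σ_{t=1}^T (p_t·y_t − c_t·x_t). -/
noncomputable section

/-- Membership in the feasible region `Q3` of the warehouse problem without
fixed costs and without lower bounds on purchases and sales. -/
def Q3mem (T : ℕ) (s0 : ℝ) (Ls Us Ux Uy : ℕ → ℝ) (x y s : ℕ → ℝ) : Prop :=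
  s 0 = s0 ∧
  (∀ t, 1 ≤ t → t ≤ T →
    s t = s (t - 1) - y t + x t ∧
    x t * y t = 0 ∧
    Ls t ≤ s t ∧ s t ≤ Us t ∧
    0 ≤ y t ∧ y t ≤ Uy t ∧
    0 ≤ x t ∧ x t ≤ Ux t)

def Q3 (T : ℕ) (s0 : ℝ) (Ls Us Ux Uy : ℕ → ℝ) :
    Set ((ℕ → ℝ) × (ℕ → ℝ) × (ℕ → ℝ)) :=
  {p | Q3mem T s0 Ls Us Ux Uy p.1 p.2.1 p.2.2}

/-- The set of positive purchase/sale upper bounds; its infimum is `U_min`. -/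
def posUpperBounds (T : ℕ) (Ux Uy : ℕ → ℝ) : Set ℝ :=
  {u | ∃ t, 1 ≤ t ∧ t ≤ T ∧ ((u = Ux t ∧ 0 < Ux t) ∨ (u = Uy t ∧ 0 < Uy t))}

/-- **Lemma (scaling)**: if `L^s_t ≤ s_0 ≤ U^s_t` for all `t` and
`K = ε·U_min`, then shrinking a feasible solution of `Q3` by the factor
`(1-ε)` around the initial stock yields a solution that is feasible for the
scaled instance whose purchase/sale upper bounds are rounded down to integer
multiples of `K`, and its linear pay-off is exactly `(1-ε)` times the
original pay-off. -/
theorem scaled_solution_feasible_and_payoff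
    (T : ℕ) (hT : 1 ≤ T) (s0 : ℝ) (Ls Us Ux Uy : ℕ → ℝ)
    (hnn : ∀ t, 1 ≤ t → t ≤ T → 0 ≤ Ls t ∧ 0 ≤ Us t ∧ 0 ≤ Ux t ∧ 0 ≤ Uy t)
    (hs0 : ∀ t, 1 ≤ t → t ≤ T → Ls t ≤ s0 ∧ s0 ≤ Us t)
    (hpos : (posUpperBounds T Ux Uy).Nonempty)
    (ε : ℝ) (hε0 : 0 < ε) (hε1 : ε < 1)
    (x y s : ℕ → ℝ) (hmem : (x, y, s) ∈ Q3 T s0 Ls Us Ux Uy) :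
    (∀ t, 1 ≤ t → t ≤ T →
      s0 + (1 - ε) * (s t - s0) =
          (s0 + (1 - ε) * (s (t - 1) - s0)) - (1 - ε) * y t + (1 - ε) * x t ∧
      ((1 - ε) * x t) * ((1 - ε) * y t) = 0 ∧
      Ls t ≤ s0 + (1 - ε) * (s t - s0) ∧ s0 + (1 - ε) * (s t - s0) ≤ Us t ∧
      0 ≤ (1 - ε) * x t ∧
      (1 - ε) * x t ≤ (ε * sInf (posUpperBounds T Ux Uy)) *
          (⌊Ux t / (ε * sInf (posUpperBounds T Ux Uy))⌋ : ℝ) ∧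
      0 ≤ (1 - ε) * y t ∧
      (1 - ε) * y t ≤ (ε * sInf (posUpperBounds T Ux Uy)) *
          (⌊Uy t / (ε * sInf (posUpperBounds T Ux Uy))⌋ : ℝ)) ∧
    (∀ p c : ℕ → ℝ,
      ∑ t ∈ Finset.Icc 1 T, (p t * ((1 - ε) * y t) - c t * ((1 - ε) * x t)) =
        (1 - ε) * ∑ t ∈ Finset.Icc 1 T, (p t * y t - c t * x t)) := by
  classical
  have hmem2 : Q3mem T s0 Ls Us Ux Uy x y s := hmem
  obtain ⟨hs00, hfeas⟩ := hmem2
  set S := posUpperBounds T Ux Uy with hS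
  have hfin : S.Finite := by
    apply Set.Finite.subset (Set.Finite.union ((Set.finite_Icc 1 T).image Ux)
      ((Set.finite_Icc 1 T).image Uy))
    rintro u ⟨t, h1, h2, (⟨rfl, -⟩ | ⟨rfl, -⟩)⟩
    · exact Or.inl ⟨t, ⟨h1, h2⟩, rfl⟩
    · exact Or.inr ⟨t, ⟨h1, h2⟩, rfl⟩
  have hbdd : BddBelow S := hfin.bddBelow
  have hInfmem : sInf S ∈ S := hpos.csInf_mem hfin
  have hInfpos : 0 < sInf S := by
    obtain ⟨t0, -, -, (⟨he, hp⟩ | ⟨he, hp⟩)⟩ := hInfmem <;> rw [he] <;> exact hp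
  set K := ε * sInf S with hK
  have hKpos : 0 < K := mul_pos hε0 hInfpos
  have h1ε : 0 ≤ 1 - ε := by linarith
  -- generic bound lemma
  have key : ∀ U v : ℝ, 0 ≤ U → 0 ≤ v → v ≤ U → (0 < U → U ∈ S) →
      (1 - ε) * v ≤ K * (⌊U / K⌋ : ℝ) := by
    intro U v hU hv hvU hUS
    have hfl : U / K - 1 < (⌊U / K⌋ : ℝ) := Int.sub_one_lt_floor _
    have hdiv : K * (U / K) = U := mul_div_cancel₀ _ (ne_of_gt hKpos)
    rcases eq_or_lt_of_le hv with hv0 | hv0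
    · have hfl0 : (0 : ℤ) ≤ ⌊U / K⌋ := Int.floor_nonneg.2 (div_nonneg hU hKpos.le)
      have : (0 : ℝ) ≤ (⌊U / K⌋ : ℝ) := by exact_mod_cast hfl0
      nlinarith
    · have hUpos : 0 < U := lt_of_lt_of_le hv0 hvU
      have hle : sInf S ≤ U := csInf_le hbdd (hUS hUpos)
      have hKU : K ≤ ε * U := by
        have := mul_le_mul_of_nonneg_left hle hε0.le
        linarith
      nlinarith
  constructor
  · intro t ht1 htT
    obtain ⟨hrec, hxy, hls, hus, hy0, hyU, hx0, hxU⟩ := hfeas t ht1 htT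
    obtain ⟨hLs0, hUs0⟩ := hs0 t ht1 htT
    obtain ⟨hLnn, hUnn, hUxnn, hUynn⟩ := hnn t ht1 htT
    refine ⟨by rw [hrec]; ring, by rw [mul_mul_mul_comm, hxy, mul_zero], ?_, ?_,
      mul_nonneg h1ε hx0, ?_, mul_nonneg h1ε hy0, ?_⟩
    · nlinarith
    · nlinarith
    · exact key (Ux t) (x t) hUxnn hx0 hxU
        (fun h => ⟨t, ht1, htT, Or.inl ⟨rfl, h⟩⟩)
    · exact key (Uy t) (y t) hUynn hy0 hyU
        (fun h => ⟨t, ht1, htT, Or.inr ⟨rfl, h⟩⟩)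
  · intro p c
    rw [Finset.mul_sum]
    exact Finset.sum_congr rfl (fun t _ => by ring)
end
end

section
/- Let a_1,…,a_n be positive integers with A = Σ_{i=1}^n a_i. Consider the warehouse instance with T = n+1 periods, initial stock s_0 = A, stock bounds 0 ≤ s_t ≤ 2A for all t, purchase and sale bounds 0 ≤ x_t ≤ a_t and 0 ≤ y_t ≤ a_t for t = 1,…,n, x_{n+1} = 0 and 0 ≤ y_{n+1} ≤ A, balance equations s_t = s_{t−1} − y_t + x_t, and complementarity constraints x_t·y_t = 0. Then every feasible point (x, y, s) of this instance satisfies Σ_{t=1}^{n+1} y_t ≤ 3A/2. -/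
noncomputable section

/-- Feasibility for the warehouse instance built from positive integers
`a_1,…,a_n` in the reduction from the partition problem: `T = n+1` periods,
initial stock `A = a_1 + ⋯ + a_n`, stock bounds `[0, 2A]`, purchase and sale
bounds `a_t` for `t ≤ n`, no purchases and sale bound `A` in period `n+1`,
balance equations and complementarity constraints. -/
def PartitionFeasible (n : ℕ) (a : ℕ → ℕ) (x y s : ℕ → ℝ) : Prop :=
  s 0 = (∑ i ∈ Finset.Icc 1 n, (a i : ℝ)) ∧
  (∀ t, 1 ≤ t → t ≤ n + 1 →
    s t = s (t - 1) - y t + x t ∧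
    x t * y t = 0 ∧
    0 ≤ s t ∧ s t ≤ 2 * ∑ i ∈ Finset.Icc 1 n, (a i : ℝ)) ∧
  (∀ t, 1 ≤ t → t ≤ n →
    0 ≤ x t ∧ x t ≤ (a t : ℝ) ∧ 0 ≤ y t ∧ y t ≤ (a t : ℝ)) ∧
  x (n + 1) = 0 ∧ 0 ≤ y (n + 1) ∧
  y (n + 1) ≤ ∑ i ∈ Finset.Icc 1 n, (a i : ℝ)

/-! A purchase and a sale in the same period exclude each other, so over periods `1,…,n` the total
purchases `X` and total sales `Y` satisfy `X + Y ≤ A`. The stock before the last period is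
`A + X - Y`, which bounds the last sale together with its own bound `A`; hence the total sales are
at most `Y + (A + (A + X - Y)) / 2 = A + (X + Y) / 2 ≤ 3A/2`. -/

theorem add_le_of_mul_eq_zero {α : Type*} [Semiring α] [NoZeroDivisors α] [Preorder α]
    {u v c : α} (huv : u * v = 0) (hu : u ≤ c) (hv : v ≤ c) : u + v ≤ c := by
  rcases mul_eq_zero.mp huv with rfl | rfl
  · rwa [zero_add]
  · rwa [add_zero]

theorem eq_add_sum_of_balance {G : Type*} [AddCommGroup G] {x y s : ℕ → G} {m : ℕ}
    (hbal : ∀ t, 1 ≤ t → t ≤ m → s t = s (t - 1) - y t + x t) :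
    s m = s 0 + ∑ i ∈ Finset.Icc 1 m, (x i - y i) := by
  induction m with
  | zero => simp
  | succ m ih =>
    rw [Finset.sum_Icc_succ_top (by omega), ← add_assoc,
      ← ih fun t ht htm => hbal t ht (by omega), hbal (m + 1) (by omega) le_rfl,
      Nat.add_sub_cancel]
    abel

namespace PartitionFeasible

variable {n : ℕ} {a : ℕ → ℕ} {x y s : ℕ → ℝ}

theorem sum_add_sum_le (h : PartitionFeasible n a x y s) :
    ∑ i ∈ Finset.Icc 1 n, x i + ∑ i ∈ Finset.Icc 1 n, y i ≤ ∑ i ∈ Finset.Icc 1 n, (a i : ℝ) := by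
  rw [← Finset.sum_add_distrib]
  refine Finset.sum_le_sum fun i hi => ?_
  obtain ⟨hi1, hin⟩ := Finset.mem_Icc.mp hi
  obtain ⟨-, hxa, -, hya⟩ := h.2.2.1 i hi1 hin
  exact add_le_of_mul_eq_zero (h.2.1 i hi1 (by omega)).2.1 hxa hya

theorem stock_eq (h : PartitionFeasible n a x y s) :
    s n = ∑ i ∈ Finset.Icc 1 n, (a i : ℝ) + ∑ i ∈ Finset.Icc 1 n, (x i - y i) := by
  rw [← h.1]
  exact eq_add_sum_of_balance fun t ht htn => (h.2.1 t ht (by omega)).1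

theorem sales_last_le_stock (h : PartitionFeasible n a x y s) : y (n + 1) ≤ s n := by
  obtain ⟨hbal, -, hs, -⟩ := h.2.1 (n + 1) (by omega) le_rfl
  rw [Nat.add_sub_cancel, h.2.2.2.1] at hbal
  linarith

end PartitionFeasible

theorem partition_instance_sales_le_general
    (n : ℕ) (a : ℕ → ℕ)
    (x y s : ℕ → ℝ) (hfeas : PartitionFeasible n a x y s) :
    ∑ t ∈ Finset.Icc 1 (n + 1), y t ≤
      3 * (∑ i ∈ Finset.Icc 1 n, (a i : ℝ)) / 2 := by
  have hXY := hfeas.sum_add_sum_le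
  have hstock := hfeas.stock_eq
  have hlast := hfeas.sales_last_le_stock
  have hlastA := hfeas.2.2.2.2.2
  rw [Finset.sum_sub_distrib] at hstock
  rw [Finset.sum_Icc_succ_top (by omega)]
  linarith

/-- **Lemma**: every feasible point of the partition-reduction instance has
total sales at most `3A/2`. -/
theorem partition_instance_sales_le
    (n : ℕ) (a : ℕ → ℕ) (hpos : ∀ i, 1 ≤ i → i ≤ n → 0 < a i)
    (x y s : ℕ → ℝ) (hfeas : PartitionFeasible n a x y s) :
    ∑ t ∈ Finset.Icc 1 (n + 1), y t ≤
      3 * (∑ i ∈ Finset.Icc 1 n, (a i : ℝ)) / 2 :=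
  partition_instance_sales_le_general n a x y s hfeas
end
end

section
/- Let a_1,…,a_n be positive integers with A = Σ_{i=1}^n a_i. Consider the warehouse instance with T = n+1 periods, initial stock s_0 = A, stock bounds 0 ≤ s_t ≤ 2A for all t, purchase and sale bounds 0 ≤ x_t ≤ a_t and 0 ≤ y_t ≤ a_t for t = 1,…,n, x_{n+1} = 0 and 0 ≤ y_{n+1} ≤ A, balance equations s_t = s_{t−1} − y_t + x_t, and complementarity constraints x_t·y_t = 0. Then there exists a feasible point (x, y, s) with Σ_{t=1}^{n+1} y_t = 3A/2 if and only if there exists a subset I ⊆ {1,…,n} with Σ_{i∈I} a_i = A/2. -/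
noncomputable section

/-- **Theorem**: the partition-reduction instance admits a feasible point with
total sales exactly `3A/2` iff the integers `a_1,…,a_n` admit a subset summing
to `A/2`. -/
theorem partition_instance_sales_eq_iff
    (n : ℕ) (a : ℕ → ℕ) (hpos : ∀ i, 1 ≤ i → i ≤ n → 0 < a i) :
    (∃ x y s : ℕ → ℝ, PartitionFeasible n a x y s ∧
        ∑ t ∈ Finset.Icc 1 (n + 1), y t =
          3 * (∑ i ∈ Finset.Icc 1 n, (a i : ℝ)) / 2) ↔
      ∃ I : Finset ℕ, I ⊆ Finset.Icc 1 n ∧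
        (∑ i ∈ I, (a i : ℝ)) = (∑ i ∈ Finset.Icc 1 n, (a i : ℝ)) / 2 := by
  simp only [PartitionFeasible]
  classical
  set A : ℝ := ∑ i ∈ Finset.Icc 1 n, (a i : ℝ) with hA
  have hAnn : 0 ≤ A := Finset.sum_nonneg fun i _ => Nat.cast_nonneg _
  constructor
  · rintro ⟨x, y, s, ⟨hs0, hbal, hbox, hxn1, hyn1, hyn1'⟩, hsum⟩
    -- telescoping
    have hs : ∀ t, t ≤ n + 1 → s t = A + ∑ i ∈ Finset.Icc 1 t, (x i - y i) := by
      intro t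
      induction t with
      | zero => intro _; simp [hs0]
      | succ m ih =>
        intro hm
        have h1 := (hbal (m+1) (by omega) hm).1
        rw [Finset.sum_Icc_succ_top (by omega : 1 ≤ m + 1)]
        have : m + 1 - 1 = m := by omega
        rw [h1, this, ih (by omega)]
        ring
    have hsplit : ∀ f : ℕ → ℝ, ∑ i ∈ Finset.Icc 1 (n+1), f i
        = (∑ i ∈ Finset.Icc 1 n, f i) + f (n+1) := fun f =>
      Finset.sum_Icc_succ_top (by omega) f
    have hsn1 := (hbal (n+1) (by omega) (le_refl _)).2.2.1
    rw [hs (n+1) (le_refl _), hsplit, Finset.sum_sub_distrib, hxn1] at hsn1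
    rw [hsplit] at hsum
    -- sum of x+y bounded by A
    have hxy : ∀ i ∈ Finset.Icc 1 n, x i + y i ≤ (a i : ℝ) := by
      intro i hi
      simp only [Finset.mem_Icc] at hi
      have hc := (hbal i hi.1 (by omega)).2.1
      obtain ⟨h1, h2, h3, h4⟩ := hbox i hi.1 hi.2
      rcases mul_eq_zero.1 hc with h | h <;> linarith
    have hsumxy : ∑ i ∈ Finset.Icc 1 n, (x i + y i) ≤ A := Finset.sum_le_sum hxy
    rw [Finset.sum_add_distrib] at hsumxy
    have hxhalf : ∑ i ∈ Finset.Icc 1 n, x i = A / 2 ∧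
        ∑ i ∈ Finset.Icc 1 n, y i = A / 2 := by
      constructor <;> linarith
    -- pointwise equality
    have hpt : ∀ i ∈ Finset.Icc 1 n, x i + y i = (a i : ℝ) := by
      have := (Finset.sum_eq_sum_iff_of_le hxy).1 ?_
      · exact this
      · rw [Finset.sum_add_distrib, hxhalf.1, hxhalf.2]
        ring
    refine ⟨(Finset.Icc 1 n).filter (fun i => y i ≠ 0), Finset.filter_subset _ _, ?_⟩
    have h1 : ∑ i ∈ (Finset.Icc 1 n).filter (fun i => y i ≠ 0), (a i : ℝ)
        = ∑ i ∈ (Finset.Icc 1 n).filter (fun i => y i ≠ 0), y i := by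
      refine Finset.sum_congr rfl fun i hi => ?_
      simp only [Finset.mem_filter] at hi
      have hc := (hbal i (Finset.mem_Icc.1 hi.1).1 (by
        have := (Finset.mem_Icc.1 hi.1).2; omega)).2.1
      have hx0 : x i = 0 := by
        rcases mul_eq_zero.1 hc with h | h
        · exact h
        · exact absurd h hi.2
      have := hpt i hi.1
      linarith [hpt i hi.1]
    rw [h1, Finset.sum_filter_ne_zero, hxhalf.2]
  · rintro ⟨I, hI, hIsum⟩
    set x : ℕ → ℝ := fun t => if t ∈ Finset.Icc 1 n ∧ t ∉ I then (a t : ℝ) else 0 with hxdef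
    set y : ℕ → ℝ := fun t => if t ∈ I then (a t : ℝ) else if t = n + 1 then A else 0 with hydef
    set s : ℕ → ℝ := fun t => A + ∑ i ∈ Finset.Icc 1 t, (x i - y i) with hsdef
    have hn1I : n + 1 ∉ I := fun h => by
      have := Finset.mem_Icc.1 (hI h); omega
    have hn1Icc : n + 1 ∉ Finset.Icc 1 n := by simp
    have hyval : ∀ i ∈ Finset.Icc 1 n, y i = if i ∈ I then (a i : ℝ) else 0 := by
      intro i hi
      have hne : i ≠ n + 1 := fun h => by
        have := Finset.mem_Icc.1 hi; omega
      simp only [hydef]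
      by_cases h : i ∈ I
      · rw [if_pos h, if_pos h]
      · rw [if_neg h, if_neg h, if_neg hne]
    have hysum : ∑ i ∈ Finset.Icc 1 n, y i = A / 2 := by
      rw [Finset.sum_congr rfl hyval, Finset.sum_ite_mem,
        Finset.inter_eq_right.2 hI, hIsum]
    have hxsum : ∑ i ∈ Finset.Icc 1 n, x i = A / 2 := by
      have : ∀ i ∈ Finset.Icc 1 n, x i = (a i : ℝ) - (if i ∈ I then (a i : ℝ) else 0) := by
        intro i hi
        simp only [hxdef]
        by_cases h : i ∈ I
        · rw [if_neg (fun hc => hc.2 h), if_pos h]; ring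
        · rw [if_pos ⟨hi, h⟩, if_neg h]; ring
      rw [Finset.sum_congr rfl this, Finset.sum_sub_distrib, Finset.sum_ite_mem,
        Finset.inter_eq_right.2 hI, hIsum]
      ring
    have hxb : ∀ i, 0 ≤ x i ∧ x i ≤ (a i : ℝ) := by
      intro i
      simp only [hxdef]
      by_cases h : i ∈ Finset.Icc 1 n ∧ i ∉ I
      · rw [if_pos h]; exact ⟨Nat.cast_nonneg _, le_refl _⟩
      · rw [if_neg h]; exact ⟨le_refl _, Nat.cast_nonneg _⟩
    have hyb : ∀ i, 1 ≤ i → i ≤ n → 0 ≤ y i ∧ y i ≤ (a i : ℝ) := by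
      intro i h1 h2
      have hne : i ≠ n + 1 := by omega
      simp only [hydef]
      by_cases h : i ∈ I
      · rw [if_pos h]; exact ⟨Nat.cast_nonneg _, le_refl _⟩
      · rw [if_neg h, if_neg hne]; exact ⟨le_refl _, Nat.cast_nonneg _⟩
    -- stock bounds for t ≤ n
    have hsb : ∀ t, t ≤ n → 0 ≤ s t ∧ s t ≤ 2 * A := by
      intro t ht
      have hsub : Finset.Icc 1 t ⊆ Finset.Icc 1 n := Finset.Icc_subset_Icc_right ht
      have hub : ∑ i ∈ Finset.Icc 1 t, (x i - y i) ≤ A := by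
        calc ∑ i ∈ Finset.Icc 1 t, (x i - y i) ≤ ∑ i ∈ Finset.Icc 1 t, (a i : ℝ) := by
              refine Finset.sum_le_sum fun i hi => ?_
              have hi' := Finset.mem_Icc.1 hi
              have := (hyb i hi'.1 (by omega)).1
              have := (hxb i).2
              linarith
          _ ≤ A := Finset.sum_le_sum_of_subset_of_nonneg hsub
              (fun i _ _ => Nat.cast_nonneg _)
      have hlb : -A ≤ ∑ i ∈ Finset.Icc 1 t, (x i - y i) := by
        have : ∑ i ∈ Finset.Icc 1 t, (-(a i : ℝ)) ≤ ∑ i ∈ Finset.Icc 1 t, (x i - y i) := by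
          refine Finset.sum_le_sum fun i hi => ?_
          have hi' := Finset.mem_Icc.1 hi
          have := (hyb i hi'.1 (by omega)).2
          have := (hxb i).1
          linarith
        have h2 : ∑ i ∈ Finset.Icc 1 t, (a i : ℝ) ≤ A :=
          Finset.sum_le_sum_of_subset_of_nonneg hsub (fun i _ _ => Nat.cast_nonneg _)
        rw [Finset.sum_neg_distrib] at this
        linarith
      constructor <;> simp only [hsdef] <;> linarith
    have hsn1 : s (n + 1) = 0 := by
      simp only [hsdef]
      rw [Finset.sum_Icc_succ_top (by omega : 1 ≤ n + 1), Finset.sum_sub_distrib,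
        hxsum, hysum]
      have hx0 : x (n+1) = 0 := by
        simp only [hxdef]
        rw [if_neg (fun hc => hn1Icc hc.1)]
      have hy0 : y (n+1) = A := by
        simp only [hydef]
        rw [if_neg hn1I]; simp
      rw [hx0, hy0]; ring
    have hx0' : x (n+1) = 0 := by
      simp only [hxdef]; rw [if_neg (fun hc => hn1Icc hc.1)]
    have hy0' : y (n+1) = A := by
      simp only [hydef]; rw [if_neg hn1I]; simp
    refine ⟨x, y, s, ⟨by simp [hsdef], ?_, ?_, hx0', ?_, ?_⟩, ?_⟩
    · intro t h1 h2
      refine ⟨?_, ?_, ?_, ?_⟩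
      · obtain ⟨m, rfl⟩ : ∃ m, t = m + 1 := ⟨t - 1, by omega⟩
        simp only [hsdef, Nat.add_sub_cancel]
        rw [Finset.sum_Icc_succ_top (by omega : 1 ≤ m + 1)]
        ring
      · by_cases h : t ∈ I
        · have hx : x t = 0 := by
            simp only [hxdef]; rw [if_neg (fun hc => hc.2 h)]
          rw [hx, zero_mul]
        · by_cases ht : t = n + 1
          · rw [ht, hx0', zero_mul]
          · have hy : y t = 0 := by
              simp only [hydef]; rw [if_neg h, if_neg ht]
            rw [hy, mul_zero]
      · rcases Nat.lt_or_ge t (n+1) with h | h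
        · exact (hsb t (by omega)).1
        · have : t = n + 1 := by omega
          rw [this, hsn1]
      · rcases Nat.lt_or_ge t (n+1) with h | h
        · exact (hsb t (by omega)).2
        · have : t = n + 1 := by omega
          rw [this, hsn1]; linarith
    · intro t h1 h2
      exact ⟨(hxb t).1, (hxb t).2, (hyb t h1 h2).1, (hyb t h1 h2).2⟩
    · rw [hy0']; exact hAnn
    · rw [hy0']
    · rw [Finset.sum_Icc_succ_top (by omega : 1 ≤ n + 1), hysum, hy0']
      ring
end
end

section
/- Let n be a positive integer and let a_1,…,a_{2n} be positive integers with A = Σ_{i=1}^{2n} a_i. Define a'_i = a_i + A for i = 1,…,2n. Then for every subset I ⊆ {1,…,2n}, Σ_{i∈I} a'_i = n·A + A/2 if and only if |I| = n and Σ_{i∈I} a_i = A/2. Moreover, max_i a'_i / min_i a'_i ≤ 2. -/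
/-- **Lemma (reduction from 2-way balanced partition)**: given positive
integers `a_1,…,a_{2n}` with total sum `A`, setting `a'_i = a_i + A`, a subset
`I ⊆ {1,…,2n}` satisfies `Σ_{i∈I} a'_i = n·A + A/2` iff `|I| = n` and
`Σ_{i∈I} a_i = A/2`; moreover all ratios `a'_i / a'_j` are at most `2`. -/
theorem balanced_partition_reduction
    (n : ℕ) (hn : 1 ≤ n) (a : ℕ → ℕ)
    (hpos : ∀ i, 1 ≤ i → i ≤ 2 * n → 0 < a i) :
    (∀ I : Finset ℕ, I ⊆ Finset.Icc 1 (2 * n) →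
      ((∑ i ∈ I, ((a i : ℝ) + ∑ j ∈ Finset.Icc 1 (2 * n), (a j : ℝ))) =
          (n : ℝ) * (∑ j ∈ Finset.Icc 1 (2 * n), (a j : ℝ)) +
            (∑ j ∈ Finset.Icc 1 (2 * n), (a j : ℝ)) / 2 ↔
        (I.card = n ∧
          (∑ i ∈ I, (a i : ℝ)) =
            (∑ j ∈ Finset.Icc 1 (2 * n), (a j : ℝ)) / 2))) ∧
    (∀ i, 1 ≤ i → i ≤ 2 * n → ∀ j, 1 ≤ j → j ≤ 2 * n →
      (a i : ℝ) + (∑ j' ∈ Finset.Icc 1 (2 * n), (a j' : ℝ)) ≤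
        2 * ((a j : ℝ) + ∑ j' ∈ Finset.Icc 1 (2 * n), (a j' : ℝ))) := by
  set A : ℝ := ∑ j ∈ Finset.Icc 1 (2*n), (a j : ℝ) with hA
  have hApos : 0 < A := Finset.sum_pos (fun i hi => by
    simp only [Finset.mem_Icc] at hi
    exact_mod_cast hpos i hi.1 hi.2) ⟨1, by simp [Finset.mem_Icc]; omega⟩
  have hle : ∀ i ∈ Finset.Icc 1 (2*n), (a i : ℝ) ≤ A := fun i hi =>
    Finset.single_le_sum (f := fun j => (a j : ℝ)) (fun j _ => by positivity) hi
  constructor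
  · intro I hI
    have hSle : (∑ i ∈ I, (a i:ℝ)) ≤ A :=
      Finset.sum_le_sum_of_subset_of_nonneg hI (fun _ _ _ => by positivity)
    have hS0 : 0 ≤ ∑ i ∈ I, (a i:ℝ) := Finset.sum_nonneg fun _ _ => by positivity
    rw [Finset.sum_add_distrib, Finset.sum_const, nsmul_eq_mul]
    constructor
    · intro h
      have hcard : I.card = n := by
        by_contra hc
        rcases lt_or_gt_of_ne hc with hlt | hgt
        · have h1 : (I.card : ℝ) + 1 ≤ n := by exact_mod_cast hlt
          nlinarith
        · have h1 : (n:ℝ) + 1 ≤ I.card := by exact_mod_cast hgt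
          nlinarith
      refine ⟨hcard, ?_⟩
      rw [hcard] at h; linarith
    · rintro ⟨hc, hs⟩
      rw [hc, hs]; ring
  · intro i hi1 hi2 j hj1 hj2
    have h1 := hle i (Finset.mem_Icc.mpr ⟨hi1, hi2⟩)
    have hj : (0:ℝ) ≤ a j := by positivity
    linarith
end
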